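/- Let n ≥ 2 and let B : V → End(V) be linear with (X,Y,Z) ↦ Ω(B(X)Y,Z) totally symmetric. Let r(X,Y) = Tr(B(X)∘B(Y)) and let ρ ∈ End(V) be the unique endomorphism with r(X,Y) = Ω(X,ρY) for all X,Y. Then the translation-invariant connection encoded by B is of Ricci type if and only if for all X,Y,Z ∈ V: 2(n+1)·B(X)(B(Y)Z) = Ω(X,Y)·ρZ + Ω(X,ρY)·Z + Ω(X,Z)·ρY + Ω(X,ρZ)·Y. -/
import Mathlib


noncomputable section

/-- The standard symplectic form `Ω(x,y) = Σ_{i=1}^{n} (x_i·y_{n+i} − x_{n+i}·y_i)`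
on `ℝ^{2n}`. -/
def Omega (n : ℕ) (x y : Fin (2*n) → ℝ) : ℝ :=
  ∑ i : Fin n, (x ⟨i.1, by have := i.isLt; omega⟩ * y ⟨n + i.1, by have := i.isLt; omega⟩
    - x ⟨n + i.1, by have := i.isLt; omega⟩ * y ⟨i.1, by have := i.isLt; omega⟩)

section aux
variable {n : ℕ}

lemma Omega_add_left (x y z : Fin (2*n) → ℝ) :
    Omega n (x + y) z = Omega n x z + Omega n y z := by
  rw [Omega, Omega, Omega, ← Finset.sum_add_distrib]
  exact Finset.sum_congr rfl fun i _ => by simp [Pi.add_apply]; ring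

lemma Omega_sub_left (x y z : Fin (2*n) → ℝ) :
    Omega n (x - y) z = Omega n x z - Omega n y z := by
  rw [Omega, Omega, Omega, ← Finset.sum_sub_distrib]
  exact Finset.sum_congr rfl fun i _ => by simp [Pi.sub_apply]; ring

lemma Omega_smul_left (c : ℝ) (x z : Fin (2*n) → ℝ) :
    Omega n (c • x) z = c * Omega n x z := by
  rw [Omega, Omega, Finset.mul_sum]
  exact Finset.sum_congr rfl fun i _ => by simp [Pi.smul_apply]; ring

lemma Omega_antisymm (x y : Fin (2*n) → ℝ) : Omega n x y = - Omega n y x := by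
  rw [Omega, Omega, ← Finset.sum_neg_distrib]
  exact Finset.sum_congr rfl fun i _ => by ring

lemma Omega_single_high (v : Fin (2*n) → ℝ) (i : ℕ) (hi : i < n) :
    Omega n v (Pi.single (⟨n + i, by omega⟩ : Fin (2*n)) 1) = v ⟨i, by omega⟩ := by
  rw [Omega, Finset.sum_eq_single (⟨i, hi⟩ : Fin n)]
  · simp [Pi.single_apply, Fin.ext_iff]
    intro h; omega
  · intro b _ hb
    have hb' : (b : ℕ) ≠ i := fun h => hb (Fin.ext h)
    simp [Pi.single_apply, Fin.ext_iff]
    rw [if_neg hb', if_neg (by omega : ¬ (b:ℕ) = n + i)]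
    ring
  · simp

lemma Omega_single_low (v : Fin (2*n) → ℝ) (i : ℕ) (hi : i < n) :
    Omega n v (Pi.single (⟨i, by omega⟩ : Fin (2*n)) 1) = - v ⟨n + i, by omega⟩ := by
  rw [Omega, Finset.sum_eq_single (⟨i, hi⟩ : Fin n)]
  · simp [Pi.single_apply, Fin.ext_iff]
    intro h; omega
  · intro b _ hb
    have hb' : (b : ℕ) ≠ i := fun h => hb (Fin.ext h)
    simp [Pi.single_apply, Fin.ext_iff]
    rw [if_neg (by omega : ¬ n + (b:ℕ) = i), if_neg hb']
    ring
  · simp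

lemma Omega_ext {v w : Fin (2*n) → ℝ} (h : ∀ T, Omega n v T = Omega n w T) : v = w := by
  funext m
  rcases lt_or_ge (m : ℕ) n with hm | hm
  · have h2 := h (Pi.single (⟨n + m.1, by omega⟩ : Fin (2*n)) 1)
    rw [Omega_single_high v m.1 hm, Omega_single_high w m.1 hm] at h2
    have hmm : (⟨m.1, by omega⟩ : Fin (2*n)) = m := Fin.ext rfl
    rwa [hmm] at h2
  · have hlt : (m:ℕ) - n < n := by have := m.isLt; omega
    have h2 := h (Pi.single (⟨(m:ℕ) - n, by omega⟩ : Fin (2*n)) 1)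
    rw [Omega_single_low v _ hlt, Omega_single_low w _ hlt] at h2
    have hmm : (⟨n + ((m:ℕ) - n), by omega⟩ : Fin (2*n)) = m := Fin.ext (by simp; omega)
    rw [hmm] at h2
    linarith

end aux

section main
variable {n : ℕ} {B : (Fin (2*n) → ℝ) →ₗ[ℝ] Module.End ℝ (Fin (2*n) → ℝ)}
  {ρ : Module.End ℝ (Fin (2*n) → ℝ)}

lemma keyC2 (hsym₂ : ∀ X Y Z, Omega n (B X Y) Z = Omega n (B X Z) Y)
    (X Y Z T : Fin (2*n) → ℝ) :
    Omega n (B X (B Y Z)) T = - Omega n (B Y (B X T)) Z := by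
  rw [hsym₂ X (B Y Z) T, Omega_antisymm (B X T) (B Y Z), hsym₂ Y Z (B X T)]

lemma keyC3 (hsym₁ : ∀ X Y Z, Omega n (B X Y) Z = Omega n (B Y X) Z)
    (hsym₂ : ∀ X Y Z, Omega n (B X Y) Z = Omega n (B X Z) Y)
    (X Y Z T : Fin (2*n) → ℝ) :
    Omega n (B X (B Y Z)) T = Omega n (B T (B Y Z)) X := by
  rw [hsym₁ X (B Y Z) T, hsym₂ (B Y Z) X T, hsym₁ (B Y Z) T X]

lemma keyC4 (hsym₁ : ∀ X Y Z, Omega n (B X Y) Z = Omega n (B Y X) Z)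
    (hsym₂ : ∀ X Y Z, Omega n (B X Y) Z = Omega n (B X Z) Y)
    (X Y Z T : Fin (2*n) → ℝ) :
    Omega n (B X (B Y Z)) T = Omega n (B X (B Z Y)) T := by
  rw [keyC2 hsym₂ X Y Z T, keyC3 hsym₁ hsym₂ Y X T Z, keyC2 hsym₂ X Z Y T]

end main

noncomputable def Dfun (n : ℕ) (B : (Fin (2*n) → ℝ) →ₗ[ℝ] Module.End ℝ (Fin (2*n) → ℝ))
    (ρ : Module.End ℝ (Fin (2*n) → ℝ)) (X Y Z T : Fin (2*n) → ℝ) : ℝ :=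
  2*((n:ℝ)+1) * Omega n (B X (B Y Z)) T -
    (Omega n X Y * Omega n (ρ Z) T + Omega n X (ρ Y) * Omega n Z T
      + Omega n X Z * Omega n (ρ Y) T + Omega n X (ρ Z) * Omega n Y T)

section main2
variable {n : ℕ} {B : (Fin (2*n) → ℝ) →ₗ[ℝ] Module.End ℝ (Fin (2*n) → ℝ)}
  {ρ : Module.End ℝ (Fin (2*n) → ℝ)}

lemma Dfun_swap23 (hsym₁ : ∀ X Y Z, Omega n (B X Y) Z = Omega n (B Y X) Z)
    (hsym₂ : ∀ X Y Z, Omega n (B X Y) Z = Omega n (B X Z) Y)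
    (X Y Z T : Fin (2*n) → ℝ) :
    Dfun n B ρ X Y Z T = Dfun n B ρ X Z Y T := by
  rw [Dfun, Dfun, keyC4 hsym₁ hsym₂ X Y Z T]
  ring

lemma Dfun_swap14 (hsym₁ : ∀ X Y Z, Omega n (B X Y) Z = Omega n (B Y X) Z)
    (hsym₂ : ∀ X Y Z, Omega n (B X Y) Z = Omega n (B X Z) Y)
    (X Y Z T : Fin (2*n) → ℝ) :
    Dfun n B ρ X Y Z T = Dfun n B ρ T Y Z X := by
  rw [Dfun, Dfun, keyC3 hsym₁ hsym₂ X Y Z T,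
    Omega_antisymm T Y, Omega_antisymm T (ρ Y), Omega_antisymm T Z, Omega_antisymm T (ρ Z),
    Omega_antisymm (ρ Z) X, Omega_antisymm Z X, Omega_antisymm (ρ Y) X, Omega_antisymm Y X]
  ring

lemma Dfun_skew (hsym₂ : ∀ X Y Z, Omega n (B X Y) Z = Omega n (B X Z) Y)
    (hR : ∀ a b, Omega n a (ρ b) = Omega n b (ρ a))
    (X Y Z T : Fin (2*n) → ℝ) :
    Dfun n B ρ X Y Z T = - Dfun n B ρ Y X T Z := by
  have hAR : ∀ a b, Omega n (ρ a) b = - Omega n a (ρ b) := by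
    intro a b; rw [Omega_antisymm (ρ a) b, hR b a]
  rw [Dfun, Dfun, keyC2 hsym₂ X Y Z T,
    hAR Z T, hAR Y T, Omega_antisymm Y X, hAR T Z, hR T Z, hR Y X,
    Omega_antisymm T Z, hAR X Z, hR Y T]
  ring

end main2

/-- For `B : V → End(V)` linear with `Ω(B(X)Y,Z)` totally symmetric,
`r(X,Y) = Tr(B(X)∘B(Y))` and `ρ` the unique endomorphism with `r(X,Y) = Ω(X,ρY)`,
the translation-invariant connection encoded by `B` is of Ricci type iff
`2(n+1)·B(X)(B(Y)Z) = Ω(X,Y)·ρZ + Ω(X,ρY)·Z + Ω(X,Z)·ρY + Ω(X,ρZ)·Y` for all `X,Y,Z`. -/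
theorem ricci_type_iff_quadratic_identity (n : ℕ) (hn : 2 ≤ n)
    (B : (Fin (2*n) → ℝ) →ₗ[ℝ] Module.End ℝ (Fin (2*n) → ℝ))
    (hsym₁ : ∀ X Y Z, Omega n (B X Y) Z = Omega n (B Y X) Z)
    (hsym₂ : ∀ X Y Z, Omega n (B X Y) Z = Omega n (B X Z) Y)
    (ρ : Module.End ℝ (Fin (2*n) → ℝ))
    (hρ : ∀ X Y, LinearMap.trace ℝ _ (B X * B Y) = Omega n X (ρ Y)) :
    (∀ X Y Z T,
      Omega n ((B X * B Y - B Y * B X) Z) T =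
        -(1 / (2*((n:ℝ)+1))) *
          (2 * Omega n X Y * LinearMap.trace ℝ _ (B Z * B T)
           + Omega n X Z * LinearMap.trace ℝ _ (B Y * B T)
           + Omega n X T * LinearMap.trace ℝ _ (B Y * B Z)
           - Omega n Y Z * LinearMap.trace ℝ _ (B X * B T)
           - Omega n Y T * LinearMap.trace ℝ _ (B X * B Z)))
    ↔
    (∀ X Y Z, (2*((n:ℝ)+1)) • (B X (B Y Z)) =
      Omega n X Y • ρ Z + Omega n X (ρ Y) • Z + Omega n X Z • ρ Y + Omega n X (ρ Z) • Y) := by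
  have hcc : (2*((n:ℝ)+1)) ≠ 0 := by positivity
  have hR : ∀ a b, Omega n a (ρ b) = Omega n b (ρ a) := by
    intro a b
    rw [← hρ a b, ← hρ b a, LinearMap.trace_mul_comm]
  have hAR : ∀ a b, Omega n (ρ a) b = - Omega n a (ρ b) := by
    intro a b; rw [Omega_antisymm (ρ a) b, hR b a]
  constructor
  · intro h X Y Z
    -- translate hypothesis into Dfun symmetry in first two slots
    have hd : ∀ X Y Z T, Dfun n B ρ X Y Z T = Dfun n B ρ Y X Z T := by
      intro X Y Z T
      have h' := h X Y Z T
      rw [hρ Z T, hρ Y T, hρ Y Z, hρ X T, hρ X Z] at h'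
      simp only [LinearMap.sub_apply, Module.End.mul_apply, Omega_sub_left] at h'
      rw [Dfun, Dfun, hAR Z T, hAR Y T, hAR X T, hR Y X, Omega_antisymm Y X]
      field_simp at h'
      linear_combination h'
    have hzero : ∀ X Y Z T, Dfun n B ρ X Y Z T = 0 := by
      intro X Y Z T
      have h1 : Dfun n B ρ X Y Z T = Dfun n B ρ Y X T Z := by
        rw [hd X Y Z T, Dfun_swap14 hsym₁ hsym₂ Y X Z T, Dfun_swap23 hsym₁ hsym₂ T X Z Y,
          hd T Z X Y, Dfun_swap14 hsym₁ hsym₂ Z T X Y, Dfun_swap23 hsym₁ hsym₂ Y T X Z]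
      have h2 := Dfun_skew hsym₂ hR X Y Z T
      rw [h1] at h2
      linarith
    apply Omega_ext
    intro T
    have hz := hzero X Y Z T
    rw [Dfun] at hz
    rw [Omega_smul_left, Omega_add_left, Omega_add_left, Omega_add_left,
      Omega_smul_left, Omega_smul_left, Omega_smul_left, Omega_smul_left]
    linear_combination hz
  · intro h X Y Z T
    have e1 := congrArg (fun v => Omega n v T) (h X Y Z)
    have e2 := congrArg (fun v => Omega n v T) (h Y X Z)
    simp only [Omega_add_left, Omega_smul_left] at e1 e2
    rw [hAR Z T, hAR Y T] at e1
    rw [hAR Z T, hAR X T, hR Y X, Omega_antisymm Y X] at e2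
    rw [hρ Z T, hρ Y T, hρ Y Z, hρ X T, hρ X Z]
    simp only [LinearMap.sub_apply, Module.End.mul_apply, Omega_sub_left]
    field_simp
    linear_combination e1 - e2
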